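/- arXiv:2406.01531 — 2 statements merged into one kernel-verified Lean document; each statement's English description precedes it below -/
import Mathlib

section
/- (Case 4 via translation of Case 2) Let x₀, y₀ ∈ ℝ³ with x₀×y₀ ≠ 0. Then J⁻¹(0,0) ∩ M_{G³(x₀,y₀)} = (I,x₀)·( J⁻¹(0,0) ∩ M_{G²(y₀)} ), i.e. the corresponding level set of the optimal momentum map for Case 4 is the translate by x₀ of that of Case 2: it equals {(λy₀+x₀, βy₀+x₀, 0, 0) : λ ≠ β} ∪ {(λy₀+x₀, βy₀+x₀, γy₀, −γy₀) : γ ≠ 0}. -/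
open Matrix

/-- Vectors in ℝ³. -/
abbrev V3 : Type := Fin 3 → ℝ

/-- The two-body phase space M = ℝ³ × ℝ³ × ℝ³ × ℝ³, points (q¹, q², p¹, p²). -/
abbrev M2B : Type := V3 × V3 × V3 × V3

/-- A 3×3 real matrix is special orthogonal. -/
def SO3 (A : Matrix (Fin 3) (Fin 3) ℝ) : Prop := Aᵀ * A = 1 ∧ A.det = 1

/-- The action of (A, a) ∈ SE(3) on the phase space:
(A,a)·(q¹,q²,p¹,p²) = (Aq¹+a, Aq²+a, Ap¹, Ap²). -/
def act (A : Matrix (Fin 3) (Fin 3) ℝ) (a : V3) (m : M2B) : M2B :=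
  (A *ᵥ m.1 + a, A *ᵥ m.2.1 + a, A *ᵥ m.2.2.1, A *ᵥ m.2.2.2)

/-- The isotropy subgroup SE(3)_{(q,p)} of a point of M, as a set of pairs (A,a)
with A special orthogonal. -/
def isotropy (m : M2B) : Set (Matrix (Fin 3) (Fin 3) ℝ × V3) :=
  {g | SO3 g.1 ∧ act g.1 g.2 m = m}

/-- The momentum map J(q¹,q²,p¹,p²) = (q¹×p¹ + q²×p², p¹+p²). -/
def Jmom (m : M2B) : V3 × V3 :=
  (m.1 ⨯₃ m.2.2.1 + m.2.1 ⨯₃ m.2.2.2, m.2.2.1 + m.2.2.2)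

/-- G¹(x) = {(A,a) ∈ SE(3) : a = x − Ax}. -/
def G1 (x : V3) : Set (Matrix (Fin 3) (Fin 3) ℝ × V3) :=
  {g | SO3 g.1 ∧ g.2 = x - g.1 *ᵥ x}

/-- G²(y) = {(A,0) ∈ SE(3) : Ay = y}. -/
def G2 (y : V3) : Set (Matrix (Fin 3) (Fin 3) ℝ × V3) :=
  {g | SO3 g.1 ∧ g.1 *ᵥ y = y ∧ g.2 = 0}

/-- G³(x,y) = {(A,a) ∈ SE(3) : Ay = y and a = x − Ax}. -/
def G3 (x y : V3) : Set (Matrix (Fin 3) (Fin 3) ℝ × V3) :=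
  {g | SO3 g.1 ∧ g.1 *ᵥ y = y ∧ g.2 = x - g.1 *ᵥ x}

/-- G⁴ = {(I, 0)}, the trivial subgroup. -/
def G4 : Set (Matrix (Fin 3) (Fin 3) ℝ × V3) := {((1 : Matrix (Fin 3) (Fin 3) ℝ), (0 : V3))}

/-!
The half-turn about the axis `x + ℝ y` lies in `G³(x, y)`, so a point with this isotropy has both
particles on that axis and both momenta along `y`; zero total momentum then forces `p² = -p¹`.
Conversely these axial states are fixed exactly by `G³(x, y)`, except a collision at rest, which is
also fixed by a half-turn about an axis perpendicular to `y`. Since `G³(0, y) = G²(y)` and the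
translation by `x` carries the axial states through `0` onto those through `x`, both claims follow.
-/

noncomputable def halfTurn (u : V3) : Matrix (Fin 3) (Fin 3) ℝ :=
  (2 / (u ⬝ᵥ u)) • vecMulVec u u - 1

lemma halfTurn_mulVec (u v : V3) :
    halfTurn u *ᵥ v = (2 / (u ⬝ᵥ u) * (u ⬝ᵥ v)) • u - v := by
  rw [halfTurn, sub_mulVec, smul_mulVec, vecMulVec_mulVec, op_smul_eq_smul, smul_smul,
    one_mulVec]

lemma halfTurn_mulVec_self {u : V3} (hu : u ≠ 0) : halfTurn u *ᵥ u = u := by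
  rw [halfTurn_mulVec, div_mul_cancel₀ _ (dotProduct_self_eq_zero.not.mpr hu), two_smul,
    add_sub_cancel_right]

lemma halfTurn_mulVec_of_dotProduct_eq_zero {u v : V3} (h : u ⬝ᵥ v = 0) :
    halfTurn u *ᵥ v = -v := by
  rw [halfTurn_mulVec, h, mul_zero, zero_smul, zero_sub]

lemma exists_eq_smul_of_halfTurn_mulVec_eq {u v : V3} (h : halfTurn u *ᵥ v = v) :
    ∃ c : ℝ, v = c • u := by
  rw [halfTurn_mulVec, sub_eq_iff_eq_add, ← two_smul ℝ v] at h
  exact ⟨2 / (u ⬝ᵥ u) * (u ⬝ᵥ v) / 2, by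
    rw [div_eq_inv_mul, mul_smul, h, smul_smul, inv_mul_cancel₀ two_ne_zero, one_smul]⟩

lemma halfTurn_mul_self {u : V3} (hu : u ≠ 0) : halfTurn u * halfTurn u = 1 := by
  have hs : u ⬝ᵥ u ≠ 0 := dotProduct_self_eq_zero.not.mpr hu
  refine ext_iff_mulVec.mpr fun v => ?_
  rw [← mulVec_mulVec, one_mulVec, halfTurn_mulVec u v, halfTurn_mulVec, dotProduct_sub,
    dotProduct_smul, smul_eq_mul]
  field_simp
  module

lemma transpose_halfTurn (u : V3) : (halfTurn u)ᵀ = halfTurn u := by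
  rw [halfTurn, transpose_sub, transpose_smul, transpose_vecMulVec, transpose_one]

lemma det_halfTurn {u : V3} (hu : u ≠ 0) : (halfTurn u).det = 1 := by
  have hs : u ⬝ᵥ u ≠ 0 := dotProduct_self_eq_zero.not.mpr hu
  have hneg : halfTurn u = -(1 + vecMulVec (-(2 / (u ⬝ᵥ u)) • u) u) := by
    rw [halfTurn, neg_smul, neg_vecMulVec, smul_vecMulVec]
    abel
  rw [hneg, det_neg, vecMulVec_eq Unit, det_one_add_replicateCol_mul_replicateRow,
    dotProduct_smul, smul_eq_mul, neg_mul, div_mul_cancel₀ _ hs]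
  norm_num

lemma SO3_halfTurn {u : V3} (hu : u ≠ 0) : SO3 (halfTurn u) :=
  ⟨by rw [transpose_halfTurn, halfTurn_mul_self hu], det_halfTurn hu⟩

def axialState (x y : V3) (l b c : ℝ) : M2B :=
  (l • y + x, b • y + x, c • y, -(c • y))

def axialStates (x y : V3) : Set M2B :=
  {m | ∃ l b c : ℝ, (l ≠ b ∨ c ≠ 0) ∧ m = axialState x y l b c}

lemma Jmom_axialState (x y : V3) (l b c : ℝ) : Jmom (axialState x y l b c) = (0, 0) := by
  simp only [Jmom, axialState, add_neg_cancel, Prod.mk.injEq, and_true]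
  simp only [LinearMap.map_add, LinearMap.map_smul, LinearMap.map_neg, LinearMap.add_apply,
    LinearMap.smul_apply, cross_self, smul_zero]
  abel

lemma mulVec_smul_add_add_eq {A : Matrix (Fin 3) (Fin 3) ℝ} {x y : V3} (hAy : A *ᵥ y = y)
    (t : ℝ) :
    A *ᵥ (t • y + x) + (x - A *ᵥ x) = t • y + x := by
  rw [mulVec_add, mulVec_smul, hAy]
  abel

lemma G3_subset_isotropy_axialState (x y : V3) (l b c : ℝ) :
    G3 x y ⊆ isotropy (axialState x y l b c) := by
  rintro ⟨A, a⟩ ⟨hA, hAy, ha : a = x - A *ᵥ x⟩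
  subst ha
  refine ⟨hA, ?_⟩
  simp only [act, axialState, mulVec_smul_add_add_eq hAy, mulVec_neg, mulVec_smul, hAy]

lemma isotropy_axialState {x y : V3} {l b c : ℝ} (h : l ≠ b ∨ c ≠ 0) :
    isotropy (axialState x y l b c) = G3 x y := by
  refine subset_antisymm ?_ (G3_subset_isotropy_axialState x y l b c)
  rintro ⟨A, a⟩ ⟨hA, hfix⟩
  simp only [act, axialState, Prod.mk.injEq, mulVec_add, mulVec_smul] at hfix
  obtain ⟨h1, h2, h3, -⟩ := hfix
  have hAy : A *ᵥ y = y := by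
    rcases h with hlb | hc
    · refine smul_right_injective V3 (sub_ne_zero.mpr hlb) ?_
      linear_combination (norm := module) h1 - h2
    · exact smul_right_injective V3 hc h3
  refine ⟨hA, hAy, ?_⟩
  rw [hAy] at h1
  linear_combination h1

lemma exists_axialState_of_halfTurn_mem_isotropy {x y : V3} {m : M2B} (hJ : (Jmom m).2 = 0)
    (hm : (halfTurn y, x - halfTurn y *ᵥ x) ∈ isotropy m) :
    ∃ l b c : ℝ, m = axialState x y l b c := by
  obtain ⟨q1, q2, p1, p2⟩ := m
  obtain ⟨-, hfix⟩ := hm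
  simp only [act, Prod.mk.injEq] at hfix
  obtain ⟨h1, h2, h3, -⟩ := hfix
  have on_axis (q : V3) (hq : halfTurn y *ᵥ q + (x - halfTurn y *ᵥ x) = q) :
      ∃ l : ℝ, q = l • y + x := (exists_eq_smul_of_halfTurn_mulVec_eq (v := q - x)
      (by rw [mulVec_sub]; linear_combination hq)).imp fun _ hl => eq_add_of_sub_eq hl
  obtain ⟨l, rfl⟩ := on_axis q1 h1
  obtain ⟨b, rfl⟩ := on_axis q2 h2
  obtain rfl : p2 = -p1 := eq_neg_of_add_eq_zero_right hJ
  obtain ⟨c, rfl⟩ := exists_eq_smul_of_halfTurn_mulVec_eq h3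
  exact ⟨l, b, c, rfl⟩

lemma isotropy_axialState_self_ne_G3 {x y : V3} (hy : y ≠ 0) (l : ℝ) :
    isotropy (axialState x y l l 0) ≠ G3 x y := by
  obtain ⟨u, hu, huy⟩ := exists_ne_zero_dotProduct_eq_zero y
  intro h
  have hmem : (halfTurn u, (l • y + x) - halfTurn u *ᵥ (l • y + x)) ∈
      isotropy (axialState x y l l 0) :=
    ⟨SO3_halfTurn hu, by simp [act, axialState]⟩
  rw [h] at hmem
  have hflip : -y = y := (halfTurn_mulVec_of_dotProduct_eq_zero huy).symm.trans hmem.2.1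
  exact hy (neg_eq_self.mp hflip)

lemma mem_axialStates_of_isotropy_eq_G3 {x y : V3} {m : M2B} (hy : y ≠ 0)
    (hJ : (Jmom m).2 = 0) (hiso : isotropy m = G3 x y) : m ∈ axialStates x y := by
  have hturn : (halfTurn y, x - halfTurn y *ᵥ x) ∈ isotropy m :=
    hiso ▸ ⟨SO3_halfTurn hy, halfTurn_mulVec_self hy, rfl⟩
  obtain ⟨l, b, c, rfl⟩ := exists_axialState_of_halfTurn_mem_isotropy hJ hturn
  refine ⟨l, b, c, ?_, rfl⟩
  by_contra! hdeg
  obtain ⟨rfl, rfl⟩ := hdeg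
  exact isotropy_axialState_self_ne_G3 hy l hiso

lemma setOf_Jmom_eq_zero_isotropy_eq_G3 (x : V3) {y : V3} (hy : y ≠ 0) :
    {m : M2B | Jmom m = (0, 0) ∧ isotropy m = G3 x y} = axialStates x y := by
  ext m
  constructor
  · rintro ⟨hJ, hiso⟩
    exact mem_axialStates_of_isotropy_eq_G3 hy (congrArg Prod.snd hJ) hiso
  · rintro ⟨l, b, c, h, rfl⟩
    exact ⟨Jmom_axialState x y l b c, isotropy_axialState h⟩

lemma G3_zero_left (y : V3) : G3 0 y = G2 y := by
  ext g
  simp [G3, G2, eq_comm]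

lemma act_one_axialState (x y : V3) (l b c : ℝ) :
    act 1 x (axialState 0 y l b c) = axialState x y l b c := by
  simp [act, axialState]

lemma image_act_one_axialStates (x y : V3) :
    act 1 x '' axialStates 0 y = axialStates x y := by
  ext m
  constructor
  · rintro ⟨_, ⟨l, b, c, h, rfl⟩, rfl⟩
    exact ⟨l, b, c, h, act_one_axialState x y l b c⟩
  · rintro ⟨l, b, c, h, rfl⟩
    exact ⟨_, ⟨l, b, c, h, rfl⟩, act_one_axialState x y l b c⟩

lemma axialStates_eq_union (x y : V3) :
    axialStates x y =
      {m : M2B | ∃ l b : ℝ, l ≠ b ∧ m = (l • y + x, b • y + x, 0, 0)} ∪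
      {m : M2B | ∃ l b c : ℝ, c ≠ 0 ∧
        m = (l • y + x, b • y + x, c • y, -(c • y))} := by
  ext m
  constructor
  · rintro ⟨l, b, c, h, rfl⟩
    by_cases hc : c = 0
    · subst hc
      exact Or.inl ⟨l, b, h.resolve_right (not_not.mpr rfl), by simp [axialState]⟩
    · exact Or.inr ⟨l, b, c, hc, rfl⟩
  · rintro (⟨l, b, hlb, rfl⟩ | ⟨l, b, c, hc, rfl⟩)
    · exact ⟨l, b, 0, Or.inl hlb, by simp [axialState]⟩
    · exact ⟨l, b, c, Or.inr hc, rfl⟩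

/-- Case 4 via translation of Case 2. -/
theorem stmt11 (x0 y0 : V3) (h : x0 ⨯₃ y0 ≠ 0) :
    {m : M2B | Jmom m = (0, 0) ∧ isotropy m = G3 x0 y0} =
      act 1 x0 '' {m : M2B | Jmom m = (0, 0) ∧ isotropy m = G2 y0} ∧
    {m : M2B | Jmom m = (0, 0) ∧ isotropy m = G3 x0 y0} =
      ({m : M2B | ∃ l b : ℝ, l ≠ b ∧ m = (l • y0 + x0, b • y0 + x0, 0, 0)} ∪
       {m : M2B | ∃ l b c : ℝ, c ≠ 0 ∧
          m = (l • y0 + x0, b • y0 + x0, c • y0, -(c • y0))}) := by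
  have hy : y0 ≠ 0 := by
    rintro rfl
    exact h (map_zero _)
  rw [← G3_zero_left, setOf_Jmom_eq_zero_isotropy_eq_G3 x0 hy,
    setOf_Jmom_eq_zero_isotropy_eq_G3 0 hy, image_act_one_axialStates]
  exact ⟨rfl, axialStates_eq_union x0 y0⟩
end

section
/- (Case 8) Let u₀ ∈ ℝ³, u₀ ≠ 0, and δ₀ ∈ ℝ, δ₀ ≠ 0. If (q¹,q²,p¹,p²) satisfies J(q¹,q²,p¹,p²) = (δ₀u₀, u₀), then N := p¹×p² ≠ 0 (so in particular SE(3)_{(q,p)} is trivial and J⁻¹(δ₀u₀,u₀) ∩ M_{G⁴} = J⁻¹(δ₀u₀,u₀)), and moreover |N|² = |p¹|²|u₀|² − ⟨p¹,u₀⟩², ⟨q¹, N⟩ = δ₀(|u₀|² − ⟨p¹,u₀⟩), and ⟨q², N⟩ = −δ₀⟨p¹,u₀⟩. Furthermore J⁻¹(δ₀u₀,u₀) is path-connected. -/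
open Matrix

/-!
On the level set `p² = u₀ - p¹`, so `N = p¹ × p² = p¹ × u₀`. Dotting the angular momentum
equation `q¹ × p¹ + q² × p² = δ₀ u₀` with `p²` and with `p¹` gives `⟨q¹, N⟩ = δ₀ ⟨u₀, p²⟩` and
`⟨q², N⟩ = -δ₀ ⟨u₀, p¹⟩`; were `N = 0`, their difference would give `δ₀ |u₀|² = 0`.
A rotation fixing `p¹` and `p²` fixes `N` as well, hence a basis, so it is the identity.

For path-connectedness, `p¹` ranges over the complement of the line `ℝ u₀`, which is
path-connected because it has codimension two. For fixed momenta the equation is affine in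
`(q¹, q²)`, so each fibre is convex, and the choice of `q¹, q²` proportional to `N` gives a
continuous section through which any two fibres are joined.
-/

section CrossProduct

variable {R : Type*} [CommRing R]

theorem cross_sub_self_right (p u : Fin 3 → R) : p ⨯₃ (u - p) = p ⨯₃ u := by
  rw [map_sub, cross_self, sub_zero]

theorem cross_add_cross_dotProduct_right (q₁ q₂ p₁ p₂ : Fin 3 → R) :
    (q₁ ⨯₃ p₁ + q₂ ⨯₃ p₂) ⬝ᵥ p₂ = q₁ ⬝ᵥ (p₁ ⨯₃ p₂) := by
  rw [add_dotProduct, dotProduct_comm, triple_product_permutation, dotProduct_comm (q₂ ⨯₃ p₂),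
    dot_cross_self, add_zero]

theorem cross_add_cross_dotProduct_left (q₁ q₂ p₁ p₂ : Fin 3 → R) :
    (q₁ ⨯₃ p₁ + q₂ ⨯₃ p₂) ⬝ᵥ p₁ = -(q₂ ⬝ᵥ (p₁ ⨯₃ p₂)) := by
  rw [add_dotProduct, dotProduct_comm (q₁ ⨯₃ p₁), dot_cross_self, zero_add, dotProduct_comm,
    triple_product_permutation, ← cross_anticomm, dotProduct_neg]

theorem transpose_mulVec_cross_mulVec (A : Matrix (Fin 3) (Fin 3) R) (x y : Fin 3 → R) :
    Aᵀ *ᵥ ((A *ᵥ x) ⨯₃ (A *ᵥ y)) = A.det • (x ⨯₃ y) := by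
  refine dotProduct_eq _ _ fun z => ?_
  have hrows : ![A *ᵥ z, A *ᵥ x, A *ᵥ y] = of ![z, x, y] * Aᵀ := by
    funext i; rw [mul_apply_eq_vecMul, vecMul_transpose]; fin_cases i <;> rfl
  rw [dotProduct_comm, dotProduct_mulVec, vecMul_transpose, triple_product_eq_det, hrows, det_mul,
    det_transpose, smul_dotProduct, dotProduct_comm, triple_product_eq_det, smul_eq_mul]
  exact mul_comm _ _

@[fun_prop]
theorem Continuous.cross {X : Type*} [TopologicalSpace X] [TopologicalSpace R]
    [IsTopologicalRing R] {f g : X → Fin 3 → R} (hf : Continuous f) (hg : Continuous g) :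
    Continuous fun x => f x ⨯₃ g x := by
  simp only [cross_apply]
  fun_prop

end CrossProduct

theorem SO3.mulVec_cross {A : Matrix (Fin 3) (Fin 3) ℝ} (hA : SO3 A) (x y : V3) :
    A *ᵥ (x ⨯₃ y) = (A *ᵥ x) ⨯₃ (A *ᵥ y) := by
  calc A *ᵥ (x ⨯₃ y) = A *ᵥ (A.det • (x ⨯₃ y)) := by rw [hA.2, one_smul]
    _ = (A * Aᵀ) *ᵥ ((A *ᵥ x) ⨯₃ (A *ᵥ y)) := by
      rw [← mulVec_mulVec, transpose_mulVec_cross_mulVec]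
    _ = (A *ᵥ x) ⨯₃ (A *ᵥ y) := by rw [mul_eq_one_comm.mp hA.1, one_mulVec]

theorem SO3.eq_one_of_mulVec_eq_self {A : Matrix (Fin 3) (Fin 3) ℝ} (hA : SO3 A) {x y : V3}
    (hx : A *ᵥ x = x) (hy : A *ᵥ y = y) (hxy : x ⨯₃ y ≠ 0) : A = 1 := by
  have hz : A *ᵥ (x ⨯₃ y) = x ⨯₃ y := by rw [SO3.mulVec_cross hA, hx, hy]
  have hrows : of ![x, y, x ⨯₃ y] * Aᵀ = of ![x, y, x ⨯₃ y] * 1 := by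
    rw [mul_one]
    funext i
    rw [mul_apply_eq_vecMul, vecMul_transpose]
    fin_cases i
    exacts [hx, hy, hz]
  have hdet : IsUnit (of ![x, y, x ⨯₃ y]).det := by
    show IsUnit (det ![x, y, x ⨯₃ y])
    rw [← triple_product_eq_det, triple_product_permutation, triple_product_permutation]
    exact Ne.isUnit (mt dotProduct_self_eq_zero.mp hxy)
  exact transpose_eq_one.mp (((isUnit_iff_isUnit_det _).mpr hdet).mul_left_cancel hrows)

theorem isotropy_eq_G4_of_cross_ne_zero {q₁ q₂ p₁ p₂ : V3} (h : p₁ ⨯₃ p₂ ≠ 0) :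
    isotropy (q₁, q₂, p₁, p₂) = G4 := by
  ext ⟨A, a⟩
  simp only [isotropy, G4, act, Set.mem_ofPred_eq, Set.mem_singleton_iff, Prod.mk.injEq]
  constructor
  · rintro ⟨hA, hq₁, -, hp₁, hp₂⟩
    obtain rfl := SO3.eq_one_of_mulVec_eq_self hA hp₁ hp₂ h
    simpa using hq₁
  · rintro ⟨rfl, rfl⟩
    simp [SO3]

theorem Jmom_eq_iff {q₁ q₂ p₁ p₂ L P : V3} :
    Jmom (q₁, q₂, p₁, p₂) = (L, P) ↔ q₁ ⨯₃ p₁ + q₂ ⨯₃ p₂ = L ∧ p₂ = P - p₁ := by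
  rw [Jmom, Prod.mk.injEq, eq_sub_iff_add_eq']

section LevelSet

variable {u₀ : V3} {d₀ : ℝ} {q₁ q₂ p₁ p₂ : V3}

theorem dotProduct_cross_left_of_Jmom_eq (hJ : Jmom (q₁, q₂, p₁, p₂) = (d₀ • u₀, u₀)) :
    q₁ ⬝ᵥ (p₁ ⨯₃ p₂) = d₀ * (u₀ ⬝ᵥ u₀ - p₁ ⬝ᵥ u₀) := by
  obtain ⟨hL, rfl⟩ := Jmom_eq_iff.mp hJ
  rw [← cross_add_cross_dotProduct_right, hL, smul_dotProduct, dotProduct_sub, smul_eq_mul,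
    dotProduct_comm u₀ p₁]

theorem dotProduct_cross_right_of_Jmom_eq (hJ : Jmom (q₁, q₂, p₁, p₂) = (d₀ • u₀, u₀)) :
    q₂ ⬝ᵥ (p₁ ⨯₃ p₂) = -(d₀ * (p₁ ⬝ᵥ u₀)) := by
  rw [← neg_neg (q₂ ⬝ᵥ _), ← cross_add_cross_dotProduct_left, (Jmom_eq_iff.mp hJ).1,
    smul_dotProduct, smul_eq_mul, dotProduct_comm]

theorem cross_dotProduct_cross_of_Jmom_eq (hJ : Jmom (q₁, q₂, p₁, p₂) = (d₀ • u₀, u₀)) :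
    (p₁ ⨯₃ p₂) ⬝ᵥ (p₁ ⨯₃ p₂) = (p₁ ⬝ᵥ p₁) * (u₀ ⬝ᵥ u₀) - (p₁ ⬝ᵥ u₀) ^ 2 := by
  obtain ⟨-, rfl⟩ := Jmom_eq_iff.mp hJ
  rw [cross_sub_self_right, cross_dot_cross, dotProduct_comm u₀ p₁, sq]

theorem cross_ne_zero_of_Jmom_eq (hu : u₀ ≠ 0) (hd : d₀ ≠ 0)
    (hJ : Jmom (q₁, q₂, p₁, p₂) = (d₀ • u₀, u₀)) : p₁ ⨯₃ p₂ ≠ 0 := by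
  intro hN
  have h₁ := dotProduct_cross_left_of_Jmom_eq hJ
  have h₂ := dotProduct_cross_right_of_Jmom_eq hJ
  rw [hN, dotProduct_zero] at h₁ h₂
  exact mul_ne_zero hd (mt dotProduct_self_eq_zero.mp hu) (by linear_combination -h₁ + h₂)

end LevelSet

theorem IsPathConnected.superset_of_forall_joinedIn {X : Type*} [TopologicalSpace X]
    {F S : Set X} (hS : IsPathConnected S) (hSF : S ⊆ F) (h : ∀ y ∈ F, ∃ x ∈ S, JoinedIn F x y) :
    IsPathConnected F := by
  obtain ⟨x₀, hx₀, hS⟩ := hS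
  refine ⟨x₀, hSF hx₀, fun y hy => ?_⟩
  obtain ⟨x, hx, hxy⟩ := h y hy
  exact ((hS hx).mono hSF).trans hxy

theorem isPathConnected_setOf_cross_ne_zero {u : V3} (hu : u ≠ 0) :
    IsPathConnected {p : V3 | p ⨯₃ u ≠ 0} := by
  have hset : {p : V3 | p ⨯₃ u ≠ 0} = (Submodule.span ℝ {u} : Set V3)ᶜ := by
    ext p
    rw [Set.mem_ofPred_eq, Set.mem_compl_iff, SetLike.mem_coe, Submodule.mem_span_singleton,
      crossProduct_ne_zero_iff_linearIndependent, LinearIndependent.pair_symm_iff,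
      LinearIndependent.pair_iff' hu, not_exists]
  have hcodim : Module.finrank ℝ (V3 ⧸ Submodule.span ℝ {u}) = 2 := by
    have := (Submodule.span ℝ {u}).finrank_quotient_add_finrank
    rw [finrank_span_singleton hu, Module.finrank_fin_fun] at this
    omega
  rw [hset]
  apply isPathConnected_compl_of_one_lt_codim
  rw [← Module.finrank_eq_rank, hcodim]
  norm_num

theorem joinedIn_Jmom_preimage {q₁ q₂ q₁' q₂' p₁ p₂ L P : V3}
    (h : Jmom (q₁, q₂, p₁, p₂) = (L, P)) (h' : Jmom (q₁', q₂', p₁, p₂) = (L, P)) :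
    JoinedIn {m | Jmom m = (L, P)} (q₁, q₂, p₁, p₂) (q₁', q₂', p₁, p₂) := by
  let C : Set (V3 × V3) := {q | q.1 ⨯₃ p₁ + q.2 ⨯₃ p₂ = L}
  have hC : Convex ℝ C :=
    (convex_singleton L).linear_preimage ((crossProduct.flip p₁).coprod (crossProduct.flip p₂))
  have hq : (q₁, q₂) ∈ C := (Prod.mk.inj h).1
  have hq' : (q₁', q₂') ∈ C := (Prod.mk.inj h').1
  refine (((hC.isPathConnected ⟨_, hq⟩).joinedIn _ hq _ hq').map
    (f := fun q => (q.1, q.2, p₁, p₂)) (by fun_prop)).mono ?_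
  rintro _ ⟨q, hq, rfl⟩
  exact Prod.ext hq (Prod.mk.inj h).2

-- `q¹, q²` are the multiples of `N = p × u₀` for which `⟨q¹, N⟩, ⟨q², N⟩` take the values forced
-- on the level set.
noncomputable def levelSection (u₀ : V3) (d₀ : ℝ) (p : V3) : M2B :=
  ((d₀ * (u₀ ⬝ᵥ u₀ - p ⬝ᵥ u₀) / ((p ⨯₃ u₀) ⬝ᵥ (p ⨯₃ u₀))) • (p ⨯₃ u₀),
    (-(d₀ * (p ⬝ᵥ u₀)) / ((p ⨯₃ u₀) ⬝ᵥ (p ⨯₃ u₀))) • (p ⨯₃ u₀), p, u₀ - p)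

theorem Jmom_levelSection {u₀ p : V3} (d₀ : ℝ) (hp : p ⨯₃ u₀ ≠ 0) :
    Jmom (levelSection u₀ d₀ p) = (d₀ • u₀, u₀) := by
  have hW : (p ⨯₃ u₀) ⬝ᵥ (p ⨯₃ u₀) ≠ 0 := mt dotProduct_self_eq_zero.mp hp
  refine Prod.ext ?_ (add_sub_cancel _ _)
  simp only [levelSection, Jmom, map_smul, LinearMap.smul_apply, map_sub]
  rw [cross_cross_eq_smul_sub_smul, cross_cross_eq_smul_sub_smul, cross_dot_cross,
    dotProduct_comm u₀ p] at *
  set W := p ⬝ᵥ p * u₀ ⬝ᵥ u₀ - p ⬝ᵥ u₀ * p ⬝ᵥ u₀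
  set a := d₀ * (u₀ ⬝ᵥ u₀ - p ⬝ᵥ u₀) / W
  set b := -(d₀ * p ⬝ᵥ u₀) / W
  have hcoef_u : a * p ⬝ᵥ p + b * p ⬝ᵥ u₀ - b * p ⬝ᵥ p = d₀ := by
    simp only [a, b]
    field_simp
    ring
  have hcoef_p : -(a * p ⬝ᵥ u₀) - b * u₀ ⬝ᵥ u₀ + b * p ⬝ᵥ u₀ = 0 := by
    simp only [a, b]
    field_simp
    ring
  linear_combination (norm := module) hcoef_u • u₀ + hcoef_p • p

theorem continuousOn_levelSection (u₀ : V3) (d₀ : ℝ) :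
    ContinuousOn (levelSection u₀ d₀) {p | p ⨯₃ u₀ ≠ 0} := by
  unfold levelSection
  fun_prop (disch := exact fun p hp => mt dotProduct_self_eq_zero.mp hp)

theorem isPathConnected_Jmom_preimage {u₀ : V3} {d₀ : ℝ} (hu : u₀ ≠ 0) (hd : d₀ ≠ 0) :
    IsPathConnected {m : M2B | Jmom m = (d₀ • u₀, u₀)} := by
  refine ((isPathConnected_setOf_cross_ne_zero hu).image' (continuousOn_levelSection u₀ d₀))
    |>.superset_of_forall_joinedIn
      (Set.image_subset_iff.mpr fun p hp => Jmom_levelSection d₀ hp) ?_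
  rintro ⟨q₁, q₂, p₁, p₂⟩ hJ
  obtain rfl := (Jmom_eq_iff.mp hJ).2
  have hN : p₁ ⨯₃ u₀ ≠ 0 := by
    simpa only [cross_sub_self_right] using cross_ne_zero_of_Jmom_eq hu hd hJ
  exact ⟨levelSection u₀ d₀ p₁, Set.mem_image_of_mem _ hN,
    joinedIn_Jmom_preimage (Jmom_levelSection d₀ hN) hJ⟩

/-- Case 8: on J⁻¹(δ₀u₀, u₀) one has N = p¹×p² ≠ 0, trivial isotropy,
the stated identities for |N|², ⟨q¹,N⟩, ⟨q²,N⟩, and the level set is path-connected. -/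
theorem stmt17 (u0 : V3) (hu : u0 ≠ 0) (d0 : ℝ) (hd : d0 ≠ 0) :
    (∀ q1 q2 p1 p2 : V3, Jmom (q1, q2, p1, p2) = (d0 • u0, u0) →
      (p1 ⨯₃ p2 ≠ 0 ∧
       isotropy (q1, q2, p1, p2) = G4 ∧
       (p1 ⨯₃ p2) ⬝ᵥ (p1 ⨯₃ p2) = (p1 ⬝ᵥ p1) * (u0 ⬝ᵥ u0) - (p1 ⬝ᵥ u0) ^ 2 ∧
       q1 ⬝ᵥ (p1 ⨯₃ p2) = d0 * (u0 ⬝ᵥ u0 - p1 ⬝ᵥ u0) ∧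
       q2 ⬝ᵥ (p1 ⨯₃ p2) = -(d0 * (p1 ⬝ᵥ u0)))) ∧
    {m : M2B | Jmom m = (d0 • u0, u0) ∧ isotropy m = G4} =
      {m : M2B | Jmom m = (d0 • u0, u0)} ∧
    IsPathConnected {m : M2B | Jmom m = (d0 • u0, u0)} := by
  refine ⟨fun q1 q2 p1 p2 hJ => ?_, ?_, isPathConnected_Jmom_preimage hu hd⟩
  · have hN := cross_ne_zero_of_Jmom_eq hu hd hJ
    exact ⟨hN, isotropy_eq_G4_of_cross_ne_zero hN, cross_dotProduct_cross_of_Jmom_eq hJ,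
      dotProduct_cross_left_of_Jmom_eq hJ, dotProduct_cross_right_of_Jmom_eq hJ⟩
  · ext ⟨q1, q2, p1, p2⟩
    exact ⟨And.left, fun hJ =>
      ⟨hJ, isotropy_eq_G4_of_cross_ne_zero (cross_ne_zero_of_Jmom_eq hu hd hJ)⟩⟩
end
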